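/- If λ ∈ ℤ and λ ≡ ε (mod 2), then the principal series module I_{λ,ε} is irreducible. -/

import Mathlib

/-! The principal series module `I_{λ,ε}` in the compact picture: basis
`{w_k : k ≡ ε (mod 2)}`, parametrized as `k = ε + 2n`, with `w_{ε+2n}` encoded
as `Finsupp.single n 1` in `ℤ →₀ ℂ`. -/

/-- `H · w_k = k · w_k`. -/
noncomputable def psH (ε : ℤ) : (ℤ →₀ ℂ) →ₗ[ℂ] (ℤ →₀ ℂ) :=
  Finsupp.lsum ℂ fun n : ℤ => (((ε + 2 * n : ℤ) : ℂ)) • Finsupp.lsingle n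

/-- `E · w_k = ((λ+k+1)/2) · w_{k+2}`. -/
noncomputable def psE (L : ℂ) (ε : ℤ) : (ℤ →₀ ℂ) →ₗ[ℂ] (ℤ →₀ ℂ) :=
  Finsupp.lsum ℂ fun n : ℤ => ((L + ((ε + 2 * n : ℤ) : ℂ) + 1) / 2) • Finsupp.lsingle (n + 1)

/-- `F · w_k = ((λ−k+1)/2) · w_{k−2}`. -/
noncomputable def psF (L : ℂ) (ε : ℤ) : (ℤ →₀ ℂ) →ₗ[ℂ] (ℤ →₀ ℂ) :=
  Finsupp.lsum ℂ fun n : ℤ => ((L - ((ε + 2 * n : ℤ) : ℂ) + 1) / 2) • Finsupp.lsingle (n - 1)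

/-- A subspace of `I_{λ,ε}` is sl₂-invariant if it is stable under `H`, `E` and `F`. -/
def SL2Invariant (L : ℂ) (ε : ℤ) (W : Submodule ℂ (ℤ →₀ ℂ)) : Prop :=
  (∀ x ∈ W, psH ε x ∈ W) ∧ (∀ x ∈ W, psE L ε x ∈ W) ∧ (∀ x ∈ W, psF L ε x ∈ W)

/-! `H` acts diagonally on the basis `w_k` with pairwise distinct eigenvalues `k`, so an
`H`-stable subspace contains every component `w_k` of each of its vectors (apply a Lagrange
interpolation polynomial in `H`). When `λ ≡ k (mod 2)` the coefficients `(λ ± k + 1)/2` are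
halves of odd integers, hence nonzero, so `E` and `F` move any `w_k` in the subspace to
`w_{k ± 2}` up to a nonzero scalar, and a nonzero invariant subspace contains the whole basis. -/

open Polynomial

theorem Submodule.mem_of_sum_mem_of_apply_eq_smul {K V ι : Type*} [Field K] [AddCommGroup V]
    [Module K V] {f : Module.End K V} {p : Submodule K V} (hp : p ≤ p.comap f)
    {s : Finset ι} {μ : ι → K} (hμ : Set.InjOn μ s) {x : ι → V}
    (hx : ∀ i, f (x i) = μ i • x i) (hsum : ∑ i ∈ s, x i ∈ p) {i : ι} (hi : i ∈ s) :
    x i ∈ p := by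
  classical
  have key : aeval f (Lagrange.basis s μ i) (∑ j ∈ s, x j) = x i := by
    rw [map_sum, Finset.sum_eq_single_of_mem i hi]
    · rw [Module.End.aeval_apply_of_mem_apply_eq_smul (hx i), Lagrange.eval_basis_self hμ hi,
        one_smul]
    · intro j hj hji
      rw [Module.End.aeval_apply_of_mem_apply_eq_smul (hx j),
        Lagrange.eval_basis_of_ne hji.symm hj, zero_smul]
  exact key ▸ aeval_apply_smul_mem_of_le_comap hsum _ f hp

theorem Finsupp.submodule_eq_top_of_forall_single_one_mem {R ι : Type*} [Semiring R]
    {W : Submodule R (ι →₀ R)} (h : ∀ i, Finsupp.single i (1 : R) ∈ W) : W = ⊤ := by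
  rw [eq_top_iff, ← Finsupp.basisSingleOne.span_eq, Submodule.span_le]
  rintro _ ⟨i, rfl⟩
  simpa using h i

section PrincipalSeries

variable {W : Submodule ℂ (ℤ →₀ ℂ)}

theorem psH_single (ε n : ℤ) (a : ℂ) :
    psH ε (Finsupp.single n a) = ((ε + 2 * n : ℤ) : ℂ) • Finsupp.single n a := by
  simp [psH]

theorem psE_single (L : ℂ) (ε n : ℤ) :
    psE L ε (Finsupp.single n 1) =
      ((L + ((ε + 2 * n : ℤ) : ℂ) + 1) / 2) • Finsupp.single (n + 1) 1 := by
  simp [psE]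

theorem psF_single (L : ℂ) (ε n : ℤ) :
    psF L ε (Finsupp.single n 1) =
      ((L - ((ε + 2 * n : ℤ) : ℂ) + 1) / 2) • Finsupp.single (n - 1) 1 := by
  simp [psF]

theorem single_apply_mem_of_psH_stable {ε : ℤ} (hH : ∀ x ∈ W, psH ε x ∈ W) {v : ℤ →₀ ℂ} (hv : v ∈ W)
    (n : ℤ) : Finsupp.single n (v n) ∈ W := by
  by_cases hn : n ∈ v.support
  · have hsum : ∑ k ∈ v.support, Finsupp.single k (v k) ∈ W := by
      rwa [← Finsupp.sum, Finsupp.sum_single]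
    have hinj : Set.InjOn (fun k : ℤ => ((ε + 2 * k : ℤ) : ℂ)) v.support :=
      fun a _ b _ hab => by simpa using hab
    exact Submodule.mem_of_sum_mem_of_apply_eq_smul hH hinj (psH_single ε · _) hsum hn
  · simp [Finsupp.notMem_support_iff.mp hn]

theorem Int.cast_add_add_one_div_two_ne_zero {m k : ℤ} (hmk : m % 2 = k % 2) :
    ((m : ℂ) + (k : ℂ) + 1) / 2 ≠ 0 := by
  have hodd : (m : ℂ) + (k : ℂ) + 1 = ((m + k + 1 : ℤ) : ℂ) := by push_cast; ring
  rw [hodd]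
  exact div_ne_zero (Int.cast_ne_zero.mpr (by omega)) two_ne_zero

theorem Int.cast_sub_add_one_div_two_ne_zero {m k : ℤ} (hmk : m % 2 = k % 2) :
    ((m : ℂ) - (k : ℂ) + 1) / 2 ≠ 0 := by
  have hodd : (m : ℂ) - (k : ℂ) + 1 = ((m - k + 1 : ℤ) : ℂ) := by push_cast; ring
  rw [hodd]
  exact div_ne_zero (Int.cast_ne_zero.mpr (by omega)) two_ne_zero

theorem single_one_mem_of_sl2Invariant {m ε : ℤ} (hpar : m % 2 = ε % 2)
    (hW : SL2Invariant (m : ℂ) ε W) {n₀ : ℤ} (h₀ : Finsupp.single n₀ (1 : ℂ) ∈ W) (n : ℤ) :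
    Finsupp.single n (1 : ℂ) ∈ W := by
  obtain ⟨-, hE, hF⟩ := hW
  have hk (k : ℤ) : m % 2 = (ε + 2 * k) % 2 := by omega
  induction n using Int.inductionOn' (b := n₀) with
  | zero => exact h₀
  | succ k _ ih =>
    have := hE _ ih
    rwa [psE_single, Submodule.smul_mem_iff _ (Int.cast_add_add_one_div_two_ne_zero (hk k))]
      at this
  | pred k _ ih =>
    have := hF _ ih
    rwa [psF_single, Submodule.smul_mem_iff _ (Int.cast_sub_add_one_div_two_ne_zero (hk k))]
      at this

end PrincipalSeries

theorem principal_series_irreducible_of_same_parity_general (m : ℤ) (ε : ℤ)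
    (hpar : m % 2 = ε % 2) (W : Submodule ℂ (ℤ →₀ ℂ))
    (hW : SL2Invariant (m : ℂ) ε W) (hW0 : W ≠ ⊥) : W = ⊤ := by
  obtain ⟨v, hv, hv0⟩ := Submodule.exists_mem_ne_zero_of_ne_bot hW0
  obtain ⟨n₀, hn₀⟩ := DFunLike.ne_iff.mp hv0
  have h₀ : Finsupp.single n₀ (1 : ℂ) ∈ W := by
    have := single_apply_mem_of_psH_stable hW.1 hv n₀
    rwa [← Finsupp.smul_single_one, Submodule.smul_mem_iff _ hn₀] at this
  exact Finsupp.submodule_eq_top_of_forall_single_one_mem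
    (single_one_mem_of_sl2Invariant hpar hW h₀)

/-- If `λ ∈ ℤ` and `λ ≡ ε (mod 2)`, the principal series `I_{λ,ε}` is irreducible. -/
theorem principal_series_irreducible_of_same_parity (m : ℤ) (ε : ℤ) (hε : ε = 0 ∨ ε = 1)
    (hpar : m % 2 = ε % 2) (W : Submodule ℂ (ℤ →₀ ℂ))
    (hW : SL2Invariant (m : ℂ) ε W) (hW0 : W ≠ ⊥) : W = ⊤ :=
  principal_series_irreducible_of_same_parity_general m ε hpar W hW hW0
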